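/- arXiv:0711.1190 — 2 statements merged into one kernel-verified Lean document; each statement's English description precedes it below -/
import Mathlib

section
/- If $V(H - z)^{-1} \in \mathcal{S}_p$ for some non-real $z$ and for every bounded self-adjoint $V$ of the form $V = G^* J G$ with $G = |V|^{1/2}$, then the map $(z, r) \mapsto V(H_r - z)^{-1}$ from $(\mathbb{C} \setminus \mathbb{R}) \times \mathbb{R}$ into $\mathcal{S}_p$ is continuous in the $\mathcal{S}_p$-norm. -/
open scoped ENNReal InnerProductSpace

noncomputable section

variable {H : Type*} [NormedAddCommGroup H] [InnerProductSpace ℂ H] [CompleteSpace H]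

/-- The `n`-th approximation number of a bounded operator: the distance from `T` to the
set of operators of rank at most `n`. On a Hilbert space this equals the `n`-th singular
value of `T`. -/
noncomputable def approxNumber (n : ℕ) (T : H →L[ℂ] H) : ℝ :=
  sInf {c | ∃ F : H →L[ℂ] H,
    Module.finrank ℂ (LinearMap.range (F : H →ₗ[ℂ] H)) ≤ n ∧ c = ‖T - F‖}

/-- Membership in the Schatten ideal `𝒮_p` (`𝒮_∞` being the compact operators):
`T` is compact and its sequence of singular values lies in `ℓ^p`. -/
def MemSchatten (p : ℝ≥0∞) (T : H →L[ℂ] H) : Prop :=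
  IsCompactOperator T ∧ Memℓp (fun n => approxNumber n T) p

/-- `R` is the resolvent `(T - z)⁻¹` of the (possibly unbounded) operator `T`. -/
def IsResolvent (T : H →ₗ.[ℂ] H) (z : ℂ) (R : H →L[ℂ] H) : Prop :=
  (∀ x : H, ∃ hx : R x ∈ T.domain, T ⟨R x, hx⟩ - z • R x = x) ∧
  ∀ y : T.domain, R (T y - z • (y : H)) = (y : H)

/-- The operator `H₀ + r V`, as an unbounded operator with the same domain as `H₀`. -/
def pert (H₀ : H →ₗ.[ℂ] H) (V : H →L[ℂ] H) (r : ℝ) : H →ₗ.[ℂ] H :=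
  H₀ + ((r : ℂ) • V).toLinearMap.toPMap ⊤

/-- The Schatten `p`-norm (operator norm for `p = ∞`), via singular values. -/
noncomputable def schattenNorm (p : ℝ≥0∞) (T : H →L[ℂ] H) : ℝ :=
  if p = ∞ then ‖T‖ else (∑' n, approxNumber n T ^ p.toReal) ^ (1 / p.toReal)

/-! The operators `H₀ + r V` are symmetric, so their resolvents satisfy `‖(H_r - z)⁻¹‖ ≤ |Im z|⁻¹`.
The resolvent identity
`(H_r - z)⁻¹ - (H_{r'} - w)⁻¹ = (H_{r'} - w)⁻¹ ((z - w) + (r' - r) V) (H_r - z)⁻¹`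
does the rest. With `(r', w) = (0, z₀)` it writes `V (H_r - z)⁻¹` as `V (H₀ - z₀)⁻¹` times a
bounded operator, which lies in `𝒮_p` because `𝒮_p` is a right ideal. With `(r', w) = (r, z)`
and `(r, z)` replaced by `(r', z')` it bounds the `𝒮_p`-norm of
`V (H_{r'} - z')⁻¹ - V (H_r - z)⁻¹` by
`‖V (H_r - z)⁻¹‖_p (|z' - z| + |r' - r| ‖V‖) / |Im z'|`, which tends to `0`. -/

theorem exists_not_finiteDimensional_range_norm_sub_lt {𝕜 E : Type*} [NontriviallyNormedField 𝕜]
    [NormedAddCommGroup E] [NormedSpace 𝕜 E] (hE : ¬ FiniteDimensional 𝕜 E) (G : E →L[𝕜] E)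
    {ε : ℝ} (hε : 0 < ε) :
    ∃ G' : E →L[𝕜] E, ¬ FiniteDimensional 𝕜 (LinearMap.range (G' : E →ₗ[𝕜] E)) ∧
      ‖G - G'‖ < ε := by
  by_cases hG : FiniteDimensional 𝕜 (LinearMap.range (G : E →ₗ[𝕜] E))
  · obtain ⟨c, hc0, hcε⟩ := NormedField.exists_norm_lt 𝕜 hε
    refine ⟨G + c • ContinuousLinearMap.id 𝕜 E, fun hG' => hE ?_, ?_⟩
    · have htop : (⊤ : Submodule 𝕜 E) ≤ LinearMap.range ((G + c • ContinuousLinearMap.id 𝕜 E :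
          E →L[𝕜] E) : E →ₗ[𝕜] E) ⊔ LinearMap.range (G : E →ₗ[𝕜] E) := by
        intro x _
        have hx : x = c⁻¹ • ((G + c • ContinuousLinearMap.id 𝕜 E) x - G x) := by
          simp [smul_smul, inv_mul_cancel₀ (norm_pos_iff.1 hc0)]
        rw [hx]
        exact Submodule.smul_mem _ _ (Submodule.sub_mem _
          (Submodule.mem_sup_left ⟨x, rfl⟩) (Submodule.mem_sup_right ⟨x, rfl⟩))
      have := Submodule.finiteDimensional_of_le htop
      exact Module.Finite.equiv (Submodule.topEquiv (R := 𝕜) (M := E))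
    · calc ‖G - (G + c • ContinuousLinearMap.id 𝕜 E)‖ = ‖c • ContinuousLinearMap.id 𝕜 E‖ := by
            rw [sub_add_cancel_left, norm_neg]
        _ ≤ ‖c‖ * 1 := (norm_smul_le _ _).trans (by gcongr; exact ContinuousLinearMap.norm_id_le)
        _ < ε := by rwa [mul_one]
  · exact ⟨G, hG, by simpa using hε⟩

theorem IsSelfAdjoint.isFormalAdjoint {𝕜 E : Type*} [RCLike 𝕜] [NormedAddCommGroup E]
    [InnerProductSpace 𝕜 E] [CompleteSpace E] {A : E →ₗ.[𝕜] E} (hA : IsSelfAdjoint A) :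
    A.IsFormalAdjoint A := by
  have h := LinearPMap.adjoint_isFormalAdjoint hA.dense_domain
  rwa [LinearPMap.isSelfAdjoint_def.mp hA] at h

section

variable {E : Type*} [NormedAddCommGroup E] [InnerProductSpace ℂ E]

theorem approxNumber_le (n : ℕ) (T F : E →L[ℂ] E)
    (hF : Module.finrank ℂ (LinearMap.range (F : E →ₗ[ℂ] E)) ≤ n) :
    approxNumber n T ≤ ‖T - F‖ :=
  csInf_le ⟨0, by rintro c ⟨F, -, rfl⟩; exact norm_nonneg _⟩ ⟨F, hF, rfl⟩

theorem approxNumber_nonneg (n : ℕ) (T : E →L[ℂ] E) : 0 ≤ approxNumber n T :=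
  Real.sInf_nonneg (by rintro c ⟨F, -, rfl⟩; exact norm_nonneg _)

/-- Since `Module.finrank` vanishes on infinite-dimensional spaces, operators of infinite rank
also count as having rank at most `n`. -/
theorem exists_finrank_range_le_norm_comp_sub_lt {n : ℕ} {F : E →L[ℂ] E}
    (hF : Module.finrank ℂ (LinearMap.range (F : E →ₗ[ℂ] E)) ≤ n) (B : E →L[ℂ] E)
    {ε : ℝ} (hε : 0 < ε) :
    ∃ F' : E →L[ℂ] E, Module.finrank ℂ (LinearMap.range (F' : E →ₗ[ℂ] E)) ≤ n ∧
      ‖F ∘L B - F'‖ < ε := by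
  by_cases hfin : FiniteDimensional ℂ (LinearMap.range (F : E →ₗ[ℂ] E))
  · refine ⟨F ∘L B, le_trans (Submodule.finrank_mono ?_) hF, by simpa using hε⟩
    rw [ContinuousLinearMap.toLinearMap_comp]
    exact LinearMap.range_comp_le_range _ _
  · have hE : ¬ FiniteDimensional ℂ E := fun _ => hfin inferInstance
    obtain ⟨F', hF', hnorm⟩ := exists_not_finiteDimensional_range_norm_sub_lt hE (F ∘L B) hε
    exact ⟨F', by simp [Module.finrank_of_infinite_dimensional hF'], hnorm⟩

theorem approxNumber_comp_le (n : ℕ) (A B : E →L[ℂ] E) :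
    approxNumber n (A ∘L B) ≤ approxNumber n A * ‖B‖ := by
  rw [mul_comm, ← smul_eq_mul, approxNumber.eq_1 n A, ← Real.sInf_smul_of_nonneg (norm_nonneg B)]
  have hzero : Module.finrank ℂ (LinearMap.range ((0 : E →L[ℂ] E) : E →ₗ[ℂ] E)) ≤ n := by
    rw [ContinuousLinearMap.toLinearMap_zero, LinearMap.range_zero, finrank_bot]
    exact n.zero_le
  refine le_csInf (Set.Nonempty.smul_set ⟨_, 0, hzero, rfl⟩) ?_
  rintro _ ⟨_, ⟨F, hF, rfl⟩, rfl⟩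
  refine le_of_forall_pos_le_add fun ε hε => ?_
  obtain ⟨F', hF', hnorm⟩ := exists_finrank_range_le_norm_comp_sub_lt hF B hε
  calc approxNumber n (A ∘L B) ≤ ‖(A - F) ∘L B + (F ∘L B - F')‖ := by
        simpa [ContinuousLinearMap.sub_comp] using approxNumber_le n (A ∘L B) F' hF'
    _ ≤ ‖A - F‖ * ‖B‖ + ε :=
        (norm_add_le _ _).trans (add_le_add (ContinuousLinearMap.opNorm_comp_le _ _) hnorm.le)
    _ = ‖B‖ • ‖A - F‖ + ε := by rw [smul_eq_mul, mul_comm]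

variable {p : ℝ≥0∞}

theorem Memℓp.approxNumber_comp {A : E →L[ℂ] E} (hA : Memℓp (fun n => approxNumber n A) p)
    (B : E →L[ℂ] E) : Memℓp (fun n => approxNumber n (A ∘L B)) p :=
  (hA.const_mul ‖B‖).mono fun n => by
    rw [Real.norm_of_nonneg (approxNumber_nonneg _ _), mul_comm]
    exact approxNumber_comp_le n A B

theorem MemSchatten.comp {A : E →L[ℂ] E} (hA : MemSchatten p A) (B : E →L[ℂ] E) :
    MemSchatten p (A ∘L B) :=
  ⟨hA.1.comp_clm B, hA.2.approxNumber_comp B⟩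

theorem schattenNorm_nonneg (T : E →L[ℂ] E) : 0 ≤ schattenNorm p T := by
  unfold schattenNorm
  split
  · exact norm_nonneg T
  · exact Real.rpow_nonneg (tsum_nonneg fun n => Real.rpow_nonneg (approxNumber_nonneg n T) _) _

theorem schattenNorm_eq_norm_lp (hp₀ : p ≠ 0) (hp : p ≠ ∞) {T : E →L[ℂ] E}
    (hT : Memℓp (fun n => approxNumber n T) p) :
    schattenNorm p T = ‖(⟨_, hT⟩ : lp (fun _ : ℕ => ℝ) p)‖ := by
  rw [schattenNorm, if_neg hp, lp.norm_eq_tsum_rpow (ENNReal.toReal_pos hp₀ hp)]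
  simp [Real.norm_of_nonneg (approxNumber_nonneg _ _)]

theorem schattenNorm_comp_le (hp : p ≠ 0) {A : E →L[ℂ] E}
    (hA : Memℓp (fun n => approxNumber n A) p) (B : E →L[ℂ] E) :
    schattenNorm p (A ∘L B) ≤ schattenNorm p A * ‖B‖ := by
  rcases eq_or_ne p ∞ with rfl | hp_top
  · simpa [schattenNorm] using A.opNorm_comp_le B
  rw [schattenNorm_eq_norm_lp hp hp_top hA,
    schattenNorm_eq_norm_lp hp hp_top (hA.approxNumber_comp B), mul_comm,
    ← norm_norm B, ← lp.norm_const_smul hp]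
  refine lp.norm_mono hp fun n => ?_
  simpa [abs_of_nonneg (approxNumber_nonneg _ _), mul_comm] using approxNumber_comp_le n A B

theorem LinearPMap.IsFormalAdjoint.abs_im_mul_norm_le {T : E →ₗ.[ℂ] E}
    (hT : T.IsFormalAdjoint T) (z : ℂ) (y : T.domain) :
    |z.im| * ‖(y : E)‖ ≤ ‖T y - z • (y : E)‖ := by
  have hTy : (⟪T y, y⟫_ℂ).im = 0 :=
    Complex.conj_eq_iff_im.1 ((inner_conj_symm _ _).trans (hT y y).symm)
  have him : (⟪T y - z • (y : E), y⟫_ℂ).im = z.im * ‖(y : E)‖ ^ 2 := by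
    rw [inner_sub_left, inner_smul_left, inner_self_eq_norm_sq_to_K]
    simp [hTy, ← Complex.ofReal_pow]
  rcases (norm_nonneg (y : E)).eq_or_lt with hy | hy
  · simp [← hy]
  refine le_of_mul_le_mul_right ?_ hy
  calc |z.im| * ‖(y : E)‖ * ‖(y : E)‖ = |(⟪T y - z • (y : E), y⟫_ℂ).im| := by
        rw [him, abs_mul, abs_of_nonneg (sq_nonneg ‖(y : E)‖), sq, mul_assoc]
    _ ≤ ‖T y - z • (y : E)‖ * ‖(y : E)‖ :=
        (Complex.abs_im_le_norm _).trans (norm_inner_le_norm _ _)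

theorem IsResolvent.norm_le {T : E →ₗ.[ℂ] E} (hT : T.IsFormalAdjoint T) {z : ℂ}
    {R : E →L[ℂ] E} (hR : IsResolvent T z R) (hz : z.im ≠ 0) : ‖R‖ ≤ |z.im|⁻¹ :=
  R.opNorm_le_bound (by positivity) fun x => by
    obtain ⟨hx, hTx⟩ := hR.1 x
    rw [inv_mul_eq_div, le_div_iff₀ (abs_pos.2 hz), mul_comm]
    simpa [hTx] using hT.abs_im_mul_norm_le z ⟨R x, hx⟩

theorem pert_apply (H₀ : E →ₗ.[ℂ] E) (V : E →L[ℂ] E) (r : ℝ) (y : (pert H₀ V r).domain) :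
    pert H₀ V r y = H₀ ⟨y, y.2.1⟩ + (r : ℂ) • V y :=
  rfl

theorem isFormalAdjoint_pert {H₀ : E →ₗ.[ℂ] E} (hH₀ : H₀.IsFormalAdjoint H₀) {V : E →L[ℂ] E}
    (hV : (V : E →ₗ[ℂ] E).IsSymmetric) (r : ℝ) :
    (pert H₀ V r).IsFormalAdjoint (pert H₀ V r) := fun x y => by
  rw [pert_apply, pert_apply, inner_add_left, inner_add_right, inner_smul_left, inner_smul_right,
    Complex.conj_ofReal, hH₀ ⟨x, x.2.1⟩ ⟨y, y.2.1⟩]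
  exact congrArg₂ _ rfl (congrArg _ (hV x y))

/-- The resolvents of `H₀ + r V` and `H₀ + r' V` differ by
`(H₀ + r' V - w) - (H₀ + r V - z) = (z - w) + (r' - r) V` sandwiched between them. -/
theorem IsResolvent.pert_sub {H₀ : E →ₗ.[ℂ] E} {V : E →L[ℂ] E} {r r' : ℝ} {z w : ℂ}
    {R Q : E →L[ℂ] E} (hR : IsResolvent (pert H₀ V r) z R)
    (hQ : IsResolvent (pert H₀ V r') w Q) :
    R - Q = Q ∘L ((z - w) • ContinuousLinearMap.id ℂ E + ((r' : ℂ) - r) • V) ∘L R := by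
  ext x
  obtain ⟨hx, hRx⟩ := hR.1 x
  have hQx := hQ.2 ⟨R x, hx⟩
  rw [pert_apply] at hRx hQx
  have hshift : H₀ ⟨R x, hx.1⟩ + (r' : ℂ) • V (R x) - w • R x
      = x + ((z - w) • R x + ((r' : ℂ) - r) • V (R x)) := by
    linear_combination (norm := module) hRx
  rw [hshift, map_add] at hQx
  simp only [sub_apply, ContinuousLinearMap.comp_apply, add_apply, smul_apply,
    ContinuousLinearMap.id_apply]
  exact sub_eq_of_eq_add' hQx.symm

variable {H₀ : E →ₗ.[ℂ] E} {V : E →L[ℂ] E} {r r' : ℝ} {z w : ℂ} {R Q : E →L[ℂ] E}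

theorem IsResolvent.pert_eq_comp (hR : IsResolvent (pert H₀ V r) z R)
    (hQ : IsResolvent (pert H₀ V r') w Q) :
    R = Q ∘L (ContinuousLinearMap.id ℂ E +
      ((z - w) • ContinuousLinearMap.id ℂ E + ((r' : ℂ) - r) • V) ∘L R) := by
  rw [ContinuousLinearMap.comp_add, ContinuousLinearMap.comp_id, ← hR.pert_sub hQ,
    add_sub_cancel]

theorem norm_smul_id_add_smul_le (c : ℂ) (s : ℝ) (V : E →L[ℂ] E) :
    ‖c • ContinuousLinearMap.id ℂ E + (s : ℂ) • V‖ ≤ ‖c‖ + |s| * ‖V‖ := by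
  refine (norm_add_le _ _).trans (add_le_add ?_ ?_)
  · simpa using norm_smul_le c (ContinuousLinearMap.id ℂ E) |>.trans
      (mul_le_of_le_one_right (norm_nonneg c) ContinuousLinearMap.norm_id_le)
  · rw [norm_smul, Complex.norm_real, Real.norm_eq_abs]

theorem schattenNorm_comp_pert_resolvent_sub_le (hp : p ≠ 0)
    (hR : IsResolvent (pert H₀ V r) z R) (hQ : IsResolvent (pert H₀ V r') w Q)
    (hVQ : Memℓp (fun n => approxNumber n (V ∘L Q)) p) :
    schattenNorm p (V ∘L R - V ∘L Q)
      ≤ schattenNorm p (V ∘L Q) * ((‖z - w‖ + |r' - r| * ‖V‖) * ‖R‖) := by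
  rw [← ContinuousLinearMap.comp_sub, hR.pert_sub hQ, ← ContinuousLinearMap.comp_assoc]
  refine (schattenNorm_comp_le hp hVQ _).trans
    (mul_le_mul_of_nonneg_left ?_ (schattenNorm_nonneg _))
  refine (ContinuousLinearMap.opNorm_comp_le _ _).trans
    (mul_le_mul_of_nonneg_right ?_ (norm_nonneg _))
  simpa using norm_smul_id_add_smul_le (z - w) (r' - r) V

end

/-- If `V (H₀ - z₀)⁻¹ ∈ 𝒮_p` for some non-real `z₀`, then the map
`(z, r) ↦ V (H_r - z)⁻¹` from `(ℂ \ ℝ) × ℝ` into `𝒮_p` is continuous in `𝒮_p`-norm. -/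
theorem continuous_V_resolvent_schatten
    (p : ℝ≥0∞) (hp : 1 ≤ p)
    (H₀ : H →ₗ.[ℂ] H) (hH₀ : IsSelfAdjoint H₀)
    (V : H →L[ℂ] H) (hV : IsSelfAdjoint V)
    (R : ℝ → ℂ → H →L[ℂ] H)
    (hR : ∀ r : ℝ, ∀ z : ℂ, z.im ≠ 0 → IsResolvent (pert H₀ V r) z (R r z))
    (z₀ : ℂ) (hz₀ : z₀.im ≠ 0)
    (h0 : MemSchatten p (V ∘L R 0 z₀)) :
    (∀ z : ℂ, z.im ≠ 0 → ∀ r : ℝ, MemSchatten p (V ∘L R r z)) ∧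
    ∀ z : ℂ, z.im ≠ 0 → ∀ r : ℝ, ∀ ε > (0 : ℝ), ∃ δ > (0 : ℝ),
      ∀ z' : ℂ, z'.im ≠ 0 → ∀ r' : ℝ, ‖z' - z‖ < δ → |r' - r| < δ →
        schattenNorm p (V ∘L R r' z' - V ∘L R r z) < ε := by
  have hmem (z : ℂ) (hz : z.im ≠ 0) (r : ℝ) : MemSchatten p (V ∘L R r z) := by
    rw [(hR r z hz).pert_eq_comp (hR 0 z₀ hz₀), ← ContinuousLinearMap.comp_assoc]
    exact h0.comp _
  refine ⟨hmem, fun z hz r ε hε => ?_⟩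
  set N := schattenNorm p (V ∘L R r z)
  let bound : ℂ × ℝ → ℝ := fun q => N * ((‖q.1 - z‖ + |r - q.2| * ‖V‖) * |q.1.im|⁻¹)
  have hbound : ContinuousAt bound (z, r) := by
    fun_prop (disch := exact abs_ne_zero.2 hz)
  obtain ⟨δ, hδ, hδbound⟩ := Metric.continuousAt_iff.1 hbound ε hε
  refine ⟨δ, hδ, fun z' hz' r' hz'z hr'r => ?_⟩
  have hdist : dist (z', r') (z, r) < δ := by
    simpa [Prod.dist_eq, dist_eq_norm, Real.dist_eq] using And.intro hz'z hr'r
  have hsymm := isFormalAdjoint_pert hH₀.isFormalAdjoint hV.isSymmetric r'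
  calc schattenNorm p (V ∘L R r' z' - V ∘L R r z)
      ≤ N * ((‖z' - z‖ + |r - r'| * ‖V‖) * ‖R r' z'‖) :=
        schattenNorm_comp_pert_resolvent_sub_le (zero_lt_one.trans_le hp).ne' (hR r' z' hz')
          (hR r z hz) (hmem z hz r).2
    _ ≤ bound (z', r') := mul_le_mul_of_nonneg_left (mul_le_mul_of_nonneg_left
        ((hR r' z' hz').norm_le hsymm hz') (by positivity)) (schattenNorm_nonneg _)
    _ < ε := (le_abs_self _).trans_lt (by simpa [bound] using hδbound hdist)
end
end

section
/- Let $f : \mathbb{C} \to \mathcal{B}(\mathcal{H})$ be a function that is meromorphic on a neighborhood of a real point $r_0$, and suppose $f(r)$ is unitary for all real $r \neq r_0$ near $r_0$. Then $f$ extends analytically to $r_0$ (i.e., $r_0$ is a removable singularity). -/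
/-
A negative order would make `‖f‖ → ∞` on the whole punctured neighbourhood of `r₀`, hence along
the punctured real line, where `f` is unitary and so has norm at most `1`. Thus the order is
nonnegative, and the normal form of `f` at `r₀` is the analytic extension.
-/

noncomputable section

variable {H : Type*} [NormedAddCommGroup H] [InnerProductSpace ℂ H] [CompleteSpace H]

open Filter Topology

section Meromorphic

variable {𝕜 E : Type*} [NontriviallyNormedField 𝕜] [NormedAddCommGroup E] [NormedSpace 𝕜 E]
  {f : 𝕜 → E} {x : 𝕜}

lemma meromorphicOrderAt_nonneg_of_isBoundedUnder {l : Filter 𝕜} [l.NeBot] (hl : l ≤ 𝓝[≠] x)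
    (hb : IsBoundedUnder (· ≤ ·) l (‖f ·‖)) : 0 ≤ meromorphicOrderAt f x := by
  by_contra! hneg
  have htends : Tendsto (‖f ·‖) l atTop :=
    tendsto_norm_atTop_iff_cobounded.mpr
      ((tendsto_cobounded_of_meromorphicOrderAt_neg hneg).mono_left hl)
  exact not_isBoundedUnder_of_tendsto_atTop htends hb

lemma MeromorphicAt.exists_analyticAt_eventuallyEq_of_meromorphicOrderAt_nonneg
    (hf : MeromorphicAt f x) (ho : 0 ≤ meromorphicOrderAt f x) :
    ∃ g : 𝕜 → E, AnalyticAt 𝕜 g x ∧ g =ᶠ[𝓝[≠] x] f :=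
  ⟨toMeromorphicNFAt f x, hf.meromorphicOrderAt_nonneg_iff_analyticAt_toMeromorphicNFAt.mp ho,
    hf.eq_nhdsNE_toMeromorphicNFAt.symm⟩

end Meromorphic

lemma Complex.tendsto_ofReal_nhdsNE (r : ℝ) : Tendsto ((↑) : ℝ → ℂ) (𝓝[≠] r) (𝓝[≠] (r : ℂ)) :=
  continuous_ofReal.continuousWithinAt.tendsto_nhdsWithin fun _ _ ↦ by simp_all

lemma norm_le_one_of_mem_unitary {A : Type*} [NormedRing A] [StarRing A] [CStarRing A]
    {u : A} (hu : u ∈ unitary A) : ‖u‖ ≤ 1 := by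
  rcases subsingleton_or_nontrivial A with _ | _
  · simp [Subsingleton.elim u 0]
  · exact (CStarRing.norm_of_mem_unitary hu).le

/-- If `f : ℂ → B(H)` is meromorphic at a real point `r₀` and `f r` is
unitary for all real `r ≠ r₀` near `r₀`, then `r₀` is a removable singularity: `f` agrees
near `r₀` (off `r₀`) with a function analytic at `r₀`. -/
theorem meromorphic_unitary_removable_singularity
    (f : ℂ → H →L[ℂ] H) (r₀ : ℝ)
    (hf : MeromorphicAt f (r₀ : ℂ))
    (hU : ∃ δ > (0 : ℝ), ∀ t : ℝ, t ≠ r₀ → |t - r₀| < δ →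
      f (t : ℂ) ∈ unitary (H →L[ℂ] H)) :
    ∃ g : ℂ → H →L[ℂ] H, AnalyticAt ℂ g (r₀ : ℂ) ∧
      ∀ᶠ w in nhdsWithin (r₀ : ℂ) {(r₀ : ℂ)}ᶜ, g w = f w := by
  obtain ⟨δ, hδ, hUδ⟩ := hU
  have hunitary : ∀ᶠ t : ℝ in 𝓝[≠] r₀, f (t : ℂ) ∈ unitary (H →L[ℂ] H) := by
    filter_upwards [self_mem_nhdsWithin,
      mem_nhdsWithin_of_mem_nhds (eventually_abs_sub_lt r₀ hδ)] with t ht hδt using hUδ t ht hδt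
  have hbounded : IsBoundedUnder (· ≤ ·) (map ((↑) : ℝ → ℂ) (𝓝[≠] r₀)) (‖f ·‖) :=
    isBoundedUnder_of_eventually_le (a := 1)
      (eventually_map.mpr (hunitary.mono fun _ ↦ norm_le_one_of_mem_unitary))
  exact hf.exists_analyticAt_eventuallyEq_of_meromorphicOrderAt_nonneg
    (meromorphicOrderAt_nonneg_of_isBoundedUnder (Complex.tendsto_ofReal_nhdsNE r₀) hbounded)
end
end
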